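/- Let β ≥ 1 and α = β + 1, let τ > 0, N ∈ ℕ with N ≥ 1, h = 1/N, and set γ := (α+β−1)/(2α) = β/α and C_p := h²/(4 sin²(πh)). Let v, v̄ ∈ ℝ^N have strictly positive entries and suppose v solves one step of the implicit Euler scheme with datum v̄, i.e. with cyclic indices, v_i − v̄_i = (ατ/h²)·v_i^{(α−1)/α}·(v_{i+1}^{β/α} − 2v_i^{β/α} + v_{i−1}^{β/α}) for all i. Define F(w) := (1/h)·Σ_{i=1}^N (w_{i+1}^γ − w_i^γ)² for positive vectors w with cyclic indices. Then F(v) − F(v̄) ≤ −τ·(2αγ/C_p)·(min_{i} v_i)^{(β−1)/α}·F(v). -/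

import Mathlib

/-!
With `γ = β / α` and `c = α τ / h²` the scheme reads `v - v̄ = c v^γ Δ(v^γ)`, `Δ` the cyclic
second difference. For `γ ∈ [1/2, 1]` the map `(x, y) ↦ (x^γ - y^γ)²` is convex on the positive
quadrant; summing its tangent-plane inequality at `(v_{i+1}, v_i)` over the edges of the cycle
and summing by parts gives `h F(v̄) ≥ h F(v) + 2cγ ∑ v_i^(2γ-1) (Δ v^γ)_i²`. Bounding
`v_i^(2γ-1)` below by `(min v)^(2γ-1)` and applying the sharp discrete Poincaré–Wirtinger
inequality (proved with the discrete Fourier transform) to the mean-zero differences of `v^γ`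
yields the decay rate.
-/

open Finset Real Set fwdDiff

theorem hessian_form_nonneg {γ P Q : ℝ} (hγ₁ : 1 / 2 ≤ γ) (hγ₂ : γ ≤ 1) (hP : 0 < P) (hQ : 0 < Q)
    (s t : ℝ) : 0 ≤ γ * (P * s - Q * t) ^ 2 - (1 - γ) * (P - Q) * (P * s ^ 2 - Q * t ^ 2) := by
  have hγ : 0 ≤ (2 * γ - 1) * (1 - γ) := mul_nonneg (by linarith) (by linarith)
  have hA : 0 < P * ((2 * γ - 1) * P + (1 - γ) * Q) := by
    refine mul_pos hP ?_
    rcases le_total P Q with h | h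
    · nlinarith [mul_nonneg (sub_nonneg.2 hγ₂) (sub_nonneg.2 h)]
    · nlinarith [mul_nonneg (sub_nonneg.2 hγ₁) (sub_nonneg.2 h)]
  -- multiplying by `A = P ((2γ - 1) P + (1 - γ) Q) > 0` completes the square in `s`
  have hsos : P * ((2 * γ - 1) * P + (1 - γ) * Q) *
      (γ * (P * s - Q * t) ^ 2 - (1 - γ) * (P - Q) * (P * s ^ 2 - Q * t ^ 2)) =
      (P * ((2 * γ - 1) * P + (1 - γ) * Q) * s - γ * P * Q * t) ^ 2 +
        P * Q * ((2 * γ - 1) * (1 - γ)) * ((P - Q) * t) ^ 2 := by ring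
  refine nonneg_of_mul_nonneg_right (hsos ▸ ?_) hA
  exact add_nonneg (sq_nonneg _) (mul_nonneg (mul_nonneg (mul_pos hP hQ).le hγ) (sq_nonneg _))

theorem hessian_sq_rpow_sub_rpow_nonneg {γ X Y : ℝ} (hγ₁ : 1 / 2 ≤ γ) (hγ₂ : γ ≤ 1) (hX : 0 < X)
    (hY : 0 < Y) (a b : ℝ) :
    0 ≤ (γ * X ^ (γ - 1) * a - γ * Y ^ (γ - 1) * b) ^ 2 +
      (X ^ γ - Y ^ γ) *
        (γ * (γ - 1) * X ^ (γ - 2) * a ^ 2 - γ * (γ - 1) * Y ^ (γ - 2) * b ^ 2) := by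
  have hX₁ : X ^ (γ - 1) = X ^ γ / X := by rw [rpow_sub hX, rpow_one]
  have hY₁ : Y ^ (γ - 1) = Y ^ γ / Y := by rw [rpow_sub hY, rpow_one]
  have hX₂ : X ^ (γ - 2) = X ^ γ / X ^ 2 := by rw [rpow_sub hX, rpow_two]
  have hY₂ : Y ^ (γ - 2) = Y ^ γ / Y ^ 2 := by rw [rpow_sub hY, rpow_two]
  calc (0 : ℝ) ≤ γ * (γ * (X ^ γ * (a / X) - Y ^ γ * (b / Y)) ^ 2 -
        (1 - γ) * (X ^ γ - Y ^ γ) * (X ^ γ * (a / X) ^ 2 - Y ^ γ * (b / Y) ^ 2)) :=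
        mul_nonneg (by linarith) <| hessian_form_nonneg hγ₁ hγ₂ (rpow_pos_of_pos hX γ)
          (rpow_pos_of_pos hY γ) (a / X) (b / Y)
    _ = _ := by rw [hX₁, hY₁, hX₂, hY₂]; ring

theorem add_deriv_mul_le_of_hasDerivAt2_nonneg {g g' g'' : ℝ → ℝ} {a b : ℝ} (hab : a < b)
    (hg : ∀ t ∈ Icc a b, HasDerivAt g (g' t) t) (hg' : ∀ t ∈ Ioo a b, HasDerivAt g' (g'' t) t)
    (hg'' : ∀ t ∈ Ioo a b, 0 ≤ g'' t) : g a + g' a * (b - a) ≤ g b := by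
  have hconv : ConvexOn ℝ (Icc a b) g := by
    refine convexOn_of_hasDerivWithinAt2_nonneg (f' := g') (f'' := g'') (convex_Icc a b)
      (fun t ht ↦ (hg t ht).continuousAt.continuousWithinAt) ?_ ?_ ?_ <;> rw [interior_Icc]
    · exact fun t ht ↦ (hg t (Ioo_subset_Icc_self ht)).hasDerivWithinAt
    · exact fun t ht ↦ (hg' t ht).hasDerivWithinAt
    · exact hg''
  have hslope := hconv.le_slope_of_hasDerivAt (left_mem_Icc.2 hab.le) (right_mem_Icc.2 hab.le) hab
    (hg a (left_mem_Icc.2 hab.le))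
  rw [slope_def_field, le_div_iff₀ (sub_pos.2 hab)] at hslope
  linarith

theorem hasDerivAt_add_mul_rpow {p x a t : ℝ} (h : 0 < x + t * a) :
    HasDerivAt (fun s ↦ (x + s * a) ^ p) (p * (x + t * a) ^ (p - 1) * a) t := by
  convert (((hasDerivAt_id' t).mul_const a).const_add x).rpow_const (p := p) (Or.inl h.ne')
    using 1
  ring

theorem sq_rpow_sub_rpow_add_deriv_le {γ x y x' y' : ℝ} (hγ₁ : 1 / 2 ≤ γ) (hγ₂ : γ ≤ 1)
    (hx : 0 < x) (hy : 0 < y) (hx' : 0 < x') (hy' : 0 < y') :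
    (x ^ γ - y ^ γ) ^ 2 +
        2 * (x ^ γ - y ^ γ) * (γ * x ^ (γ - 1) * (x' - x) - γ * y ^ (γ - 1) * (y' - y)) ≤
      (x' ^ γ - y' ^ γ) ^ 2 := by
  obtain ⟨a, rfl⟩ : ∃ a, x' = x + a := ⟨x' - x, by ring⟩
  obtain ⟨b, rfl⟩ : ∃ b, y' = y + b := ⟨y' - y, by ring⟩
  have hX : ∀ t ∈ Icc (0 : ℝ) 1, 0 < x + t * a := fun t ht ↦ by
    simpa using (convex_Ioi 0).add_smul_sub_mem (mem_Ioi.2 hx) (mem_Ioi.2 hx') ht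
  have hY : ∀ t ∈ Icc (0 : ℝ) 1, 0 < y + t * b := fun t ht ↦ by
    simpa using (convex_Ioi 0).add_smul_sub_mem (mem_Ioi.2 hy) (mem_Ioi.2 hy') ht
  have key := add_deriv_mul_le_of_hasDerivAt2_nonneg zero_lt_one
    (g := fun t ↦ ((x + t * a) ^ γ - (y + t * b) ^ γ) ^ 2)
    (g' := fun t ↦ 2 * ((x + t * a) ^ γ - (y + t * b) ^ γ) *
      (γ * (x + t * a) ^ (γ - 1) * a - γ * (y + t * b) ^ (γ - 1) * b))
    (g'' := fun t ↦ 2 * ((γ * (x + t * a) ^ (γ - 1) * a - γ * (y + t * b) ^ (γ - 1) * b) ^ 2 +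
      ((x + t * a) ^ γ - (y + t * b) ^ γ) *
        (γ * (γ - 1) * (x + t * a) ^ (γ - 2) * a ^ 2 -
          γ * (γ - 1) * (y + t * b) ^ (γ - 2) * b ^ 2)))
    (fun t ht ↦ by
      have hu := (hasDerivAt_add_mul_rpow (p := γ) (hX t ht)).sub
        (hasDerivAt_add_mul_rpow (p := γ) (hY t ht))
      exact (hu.pow 2).congr_deriv (by simp only [Pi.sub_apply, Nat.cast_ofNat]; ring))
    (fun t ht ↦ by
      have hXt := hX t (Ioo_subset_Icc_self ht)
      have hYt := hY t (Ioo_subset_Icc_self ht)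
      have hu := (hasDerivAt_add_mul_rpow (p := γ) hXt).sub (hasDerivAt_add_mul_rpow (p := γ) hYt)
      have hu' := (((hasDerivAt_add_mul_rpow (p := γ - 1) hXt).const_mul γ).mul_const a).sub
        (((hasDerivAt_add_mul_rpow (p := γ - 1) hYt).const_mul γ).mul_const b)
      refine ((hu.const_mul 2).mul hu').congr_deriv ?_
      simp only [Pi.sub_apply, show γ - 1 - 1 = γ - 2 by ring]
      ring)
    (fun t ht ↦ mul_nonneg zero_le_two <| hessian_sq_rpow_sub_rpow_nonneg hγ₁ hγ₂
      (hX t (Ioo_subset_Icc_self ht)) (hY t (Ioo_subset_Icc_self ht)) _ _)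
  simpa using key

theorem sum_comp_add_right {G M : Type*} [AddGroup G] [Fintype G] [AddCommMonoid M] (f : G → M)
    (h : G) : ∑ x, f (x + h) = ∑ x, f x :=
  Equiv.sum_comp (Equiv.addRight h) f

theorem sum_fwdDiff_mul_fwdDiff {G R : Type*} [AddCommGroup G] [Fintype G] [CommRing R] (h : G)
    (a b : G → R) :
    ∑ x, Δ_[h] a x * Δ_[h] b x = -∑ x, b x * (a (x + h) - 2 * a x + a (x - h)) := by
  rw [eq_neg_iff_add_eq_zero, ← sum_add_distrib]
  calc ∑ x, (Δ_[h] a x * Δ_[h] b x + b x * (a (x + h) - 2 * a x + a (x - h)))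
      = ∑ x, (a (x + h) * b (x + h) - a x * b x) +
          ∑ x, (b x * a (x - h) - a x * b (x + h)) := by
        rw [← sum_add_distrib]
        exact sum_congr rfl fun x _ ↦ by simp only [fwdDiff]; ring
    _ = 0 := by
        rw [sum_sub_distrib, sum_sub_distrib, sum_comp_add_right (fun x ↦ a x * b x),
          ← sum_comp_add_right (fun x ↦ b x * a (x - h)) h]
        simp [mul_comm]

noncomputable def cyclicRoot (N : ℕ) : ℂ := Complex.exp (2 * π * Complex.I / N)

noncomputable def dft {N : ℕ} (z : Fin N → ℝ) (k : ℕ) : ℂ :=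
  ∑ j, (z j : ℂ) * (cyclicRoot N ^ (j : ℕ)) ^ k

theorem dft_zero {N : ℕ} (z : Fin N → ℝ) : dft z 0 = ∑ j, (z j : ℂ) := by
  simp [dft]

theorem sq_norm_one_sub_cyclicRoot_pow (N k : ℕ) :
    ‖1 - cyclicRoot N ^ k‖ ^ 2 = 4 * sin (π * k / N) ^ 2 := by
  have : cyclicRoot N ^ k = Complex.exp (Complex.I * ↑(2 * π * k / N)) := by
    rw [cyclicRoot, ← Complex.exp_nat_mul]; push_cast; ring_nf
  rw [this, norm_sub_rev, Complex.norm_exp_I_mul_ofReal_sub_one, norm_mul, Real.norm_eq_abs,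
    Real.norm_eq_abs, mul_pow, sq_abs, sq_abs]
  ring_nf

section Fourier

variable {N : ℕ} [NeZero N]

theorem isPrimitiveRoot_cyclicRoot : IsPrimitiveRoot (cyclicRoot N) N :=
  Complex.isPrimitiveRoot_exp N (NeZero.ne N)

theorem norm_cyclicRoot : ‖cyclicRoot N‖ = 1 :=
  isPrimitiveRoot_cyclicRoot.norm'_eq_one (NeZero.ne N)

theorem cyclicRoot_pow_val_add_one (j : Fin N) :
    cyclicRoot N ^ ((j + 1 : Fin N) : ℕ) = cyclicRoot N ^ (j : ℕ) * cyclicRoot N := by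
  have hN := (isPrimitiveRoot_cyclicRoot (N := N)).pow_eq_one
  rw [Fin.val_add, ← pow_eq_pow_mod _ hN, pow_add, Fin.val_one', ← pow_eq_pow_mod _ hN, pow_one]

theorem sin_sq_pi_div_le {k : ℕ} (hk : 1 ≤ k) (hkN : k < N) :
    sin (π / N) ^ 2 ≤ sin (π * k / N) ^ 2 := by
  have hN : (0 : ℝ) < N := Nat.cast_pos.2 (NeZero.pos N)
  have hk' : (1 : ℝ) ≤ k := Nat.one_le_cast.2 hk
  have hkN' : (k : ℝ) + 1 ≤ N := by exact_mod_cast hkN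
  have h₁ : π / N ≤ π * k / N := div_le_div_of_nonneg_right (by nlinarith [pi_pos]) hN.le
  have h₂ : π * k / N ≤ π - π / N := by
    rw [div_le_iff₀ hN, sub_mul, div_mul_cancel₀ _ hN.ne']; nlinarith [pi_pos]
  have h₀ : 0 ≤ π / N := by positivity
  -- `sin` is concave on `[0, π]`, so on `[π/N, π - π/N]` it is smallest at the endpoints
  have hmin := strictConcaveOn_sin_Icc.concaveOn.min_le_of_mem_Icc
    (Set.mem_Icc.2 ⟨h₀, by linarith⟩) (Set.mem_Icc.2 ⟨by linarith, by linarith⟩) ⟨h₁, h₂⟩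
  rw [sin_pi_sub, min_self] at hmin
  exact pow_le_pow_left₀ (sin_nonneg_of_nonneg_of_le_pi h₀ (by linarith)) hmin 2

theorem sum_pow_mul_conj_pow (j l : Fin N) :
    ∑ k ∈ range N, (cyclicRoot N ^ (j : ℕ)) ^ k * (starRingEnd ℂ) ((cyclicRoot N ^ (l : ℕ)) ^ k) =
      if j = l then (N : ℂ) else 0 := by
  have hunit : ∀ n : ℕ, cyclicRoot N ^ n * (starRingEnd ℂ) (cyclicRoot N ^ n) = 1 := fun n ↦ by
    rw [Complex.mul_conj', norm_pow, norm_cyclicRoot]; norm_num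
  set ζ := cyclicRoot N ^ (j : ℕ) * (starRingEnd ℂ) (cyclicRoot N ^ (l : ℕ))
  have hpow : ∀ k : ℕ, (cyclicRoot N ^ (j : ℕ)) ^ k *
      (starRingEnd ℂ) ((cyclicRoot N ^ (l : ℕ)) ^ k) = ζ ^ k := fun k ↦ by
    rw [map_pow, mul_pow]
  simp only [hpow]
  split_ifs with hjl
  · have hζ : ζ = 1 := by simp only [ζ, hjl, hunit]
    simp [hζ]
  have hζN : ζ ^ N = 1 := by
    rw [← hpow, ← pow_mul, ← pow_mul, mul_comm _ N, mul_comm _ N, pow_mul, pow_mul,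
      isPrimitiveRoot_cyclicRoot.pow_eq_one, one_pow, one_pow, map_one, one_mul]
  have hζ : ζ ≠ 1 := fun h ↦ hjl <| Fin.ext <|
    isPrimitiveRoot_cyclicRoot.pow_inj j.isLt l.isLt <| by
      have : ζ * cyclicRoot N ^ (l : ℕ) = cyclicRoot N ^ (j : ℕ) := by
        rw [mul_assoc, mul_comm (starRingEnd ℂ _), hunit, mul_one]
      rwa [h, one_mul, eq_comm] at this
  rw [geom_sum_eq hζ, hζN, sub_self, zero_div]

theorem sum_sq_norm_dft (z : Fin N → ℝ) :
    ∑ k ∈ range N, ‖dft z k‖ ^ 2 = N * ∑ j, z j ^ 2 := by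
  apply Complex.ofReal_injective
  push_cast
  simp_rw [← Complex.mul_conj', dft, map_sum, map_mul, Complex.conj_ofReal, sum_mul_sum]
  rw [sum_comm]
  calc _ = ∑ j, ∑ l, (z j * z l : ℂ) * ∑ k ∈ range N,
        (cyclicRoot N ^ (j : ℕ)) ^ k * (starRingEnd ℂ) ((cyclicRoot N ^ (l : ℕ)) ^ k) := by
        refine sum_congr rfl fun j _ ↦ ?_
        rw [sum_comm]
        exact sum_congr rfl fun l _ ↦ by rw [mul_sum]; exact sum_congr rfl fun k _ ↦ by ring
    _ = _ := by
        simp only [sum_pow_mul_conj_pow, mul_ite, mul_zero, sum_ite_eq, Finset.mem_univ, if_true,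
          mul_sum]
        exact sum_congr rfl fun j _ ↦ by ring

theorem dft_fwdDiff (z : Fin N → ℝ) (k : ℕ) :
    cyclicRoot N ^ k * dft (Δ_[1] z) k = (1 - cyclicRoot N ^ k) * dft z k := by
  have hshift : cyclicRoot N ^ k * ∑ j, (z (j + 1) : ℂ) * (cyclicRoot N ^ (j : ℕ)) ^ k =
      dft z k := by
    rw [mul_sum, dft]
    refine Fintype.sum_equiv (Equiv.addRight 1) _ _ fun j ↦ ?_
    rw [Equiv.coe_addRight, cyclicRoot_pow_val_add_one, mul_pow]; ring
  simp only [dft, fwdDiff, Complex.ofReal_sub, sub_mul, sum_sub_distrib, mul_sub]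
  rw [hshift, dft]; ring

theorem norm_dft_fwdDiff (z : Fin N → ℝ) (k : ℕ) :
    ‖dft (Δ_[1] z) k‖ = ‖1 - cyclicRoot N ^ k‖ * ‖dft z k‖ := by
  simpa [norm_cyclicRoot] using congrArg norm (dft_fwdDiff z k)

theorem poincare_wirtinger_fin (z : Fin N → ℝ) (hz : ∑ i, z i = 0) :
    4 * sin (π / N) ^ 2 * ∑ i, z i ^ 2 ≤ ∑ i, Δ_[1] z i ^ 2 := by
  refine le_of_mul_le_mul_left ?_ (Nat.cast_pos.2 (NeZero.pos N) : (0 : ℝ) < N)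
  rw [← sum_sq_norm_dft, mul_left_comm, ← sum_sq_norm_dft, mul_sum]
  refine sum_le_sum fun k hk ↦ ?_
  rw [norm_dft_fwdDiff, mul_pow, sq_norm_one_sub_cyclicRoot_pow]
  rcases Nat.eq_zero_or_pos k with rfl | hk₀
  · simp [dft_zero, ← Complex.ofReal_sum, hz]
  · exact mul_le_mul_of_nonneg_right (by linarith [sin_sq_pi_div_le hk₀ (mem_range.1 hk)])
      (sq_nonneg _)

end Fourier

theorem poincare_wirtinger_fin_fwdDiff {N : ℕ} [NeZero N] (u : Fin N → ℝ) :
    4 * sin (π / N) ^ 2 * ∑ i, Δ_[1] u i ^ 2 ≤ ∑ i, (u (i + 1) - 2 * u i + u (i - 1)) ^ 2 := by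
  have hmean : ∑ i, Δ_[1] u i = 0 := by
    simp only [fwdDiff, sum_sub_distrib, sum_comp_add_right, sub_self]
  calc _ ≤ ∑ i, Δ_[1] (Δ_[1] u) i ^ 2 := poincare_wirtinger_fin _ hmean
    _ = _ := by
        rw [← sum_comp_add_right (fun i ↦ (u (i + 1) - 2 * u i + u (i - 1)) ^ 2) 1]
        exact sum_congr rfl fun i _ ↦ by simp only [fwdDiff, add_sub_cancel_right]; ring

theorem sum_sq_fwdDiff_rpow_add_le {N : ℕ} [NeZero N] {γ c : ℝ} (hγ₁ : 1 / 2 ≤ γ) (hγ₂ : γ ≤ 1)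
    {v vbar : Fin N → ℝ} (hv : ∀ i, 0 < v i) (hvbar : ∀ i, 0 < vbar i)
    (hs : ∀ i, v i - vbar i = c * v i ^ γ * (v (i + 1) ^ γ - 2 * v i ^ γ + v (i - 1) ^ γ)) :
    ∑ i, Δ_[1] (v · ^ γ) i ^ 2 +
        2 * c * γ * ∑ i, v i ^ (2 * γ - 1) * (v (i + 1) ^ γ - 2 * v i ^ γ + v (i - 1) ^ γ) ^ 2 ≤
      ∑ i, Δ_[1] (vbar · ^ γ) i ^ 2 := by
  set q : Fin N → ℝ := fun i ↦ γ * v i ^ (γ - 1) * (vbar i - v i)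
  have hq : ∀ i, q i = -(c * γ * v i ^ (2 * γ - 1) *
      (v (i + 1) ^ γ - 2 * v i ^ γ + v (i - 1) ^ γ)) := fun i ↦ by
    have hpow : v i ^ (γ - 1) * v i ^ γ = v i ^ (2 * γ - 1) := by
      rw [← rpow_add (hv i)]; ring_nf
    simp only [q]
    linear_combination (-(γ * v i ^ (γ - 1))) * hs i - c * γ *
      (v (i + 1) ^ γ - 2 * v i ^ γ + v (i - 1) ^ γ) * hpow
  have hcross : ∑ i, Δ_[1] (v · ^ γ) i * Δ_[1] q i =
      c * γ * ∑ i, v i ^ (2 * γ - 1) * (v (i + 1) ^ γ - 2 * v i ^ γ + v (i - 1) ^ γ) ^ 2 := by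
    rw [sum_fwdDiff_mul_fwdDiff, mul_sum, ← sum_neg_distrib]
    exact sum_congr rfl fun i _ ↦ by rw [hq]; ring
  calc _ = ∑ i, (Δ_[1] (v · ^ γ) i ^ 2 + 2 * (Δ_[1] (v · ^ γ) i * Δ_[1] q i)) := by
        rw [sum_add_distrib, ← mul_sum, hcross]; ring
    _ ≤ _ := sum_le_sum fun i _ ↦ by
        have := sq_rpow_sub_rpow_add_deriv_le hγ₁ hγ₂ (hv (i + 1)) (hv i) (hvbar (i + 1)) (hvbar i)
        simp only [fwdDiff, q]
        linarith

theorem implicit_step_sum_sq_fwdDiff_rpow_le {N : ℕ} [NeZero N] {γ c m : ℝ} (hγ₁ : 1 / 2 ≤ γ)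
    (hγ₂ : γ ≤ 1) (hc : 0 ≤ c) (hm : 0 < m) {v vbar : Fin N → ℝ} (hmv : ∀ i, m ≤ v i)
    (hvbar : ∀ i, 0 < vbar i)
    (hs : ∀ i, v i - vbar i = c * v i ^ γ * (v (i + 1) ^ γ - 2 * v i ^ γ + v (i - 1) ^ γ)) :
    (1 + 2 * c * γ * m ^ (2 * γ - 1) * (4 * sin (π / N) ^ 2)) * ∑ i, Δ_[1] (v · ^ γ) i ^ 2 ≤
      ∑ i, Δ_[1] (vbar · ^ γ) i ^ 2 := by
  have hv : ∀ i, 0 < v i := fun i ↦ hm.trans_le (hmv i)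
  have hweight : m ^ (2 * γ - 1) * ∑ i, (v (i + 1) ^ γ - 2 * v i ^ γ + v (i - 1) ^ γ) ^ 2 ≤
      ∑ i, v i ^ (2 * γ - 1) * (v (i + 1) ^ γ - 2 * v i ^ γ + v (i - 1) ^ γ) ^ 2 := by
    rw [mul_sum]
    exact sum_le_sum fun i _ ↦ mul_le_mul_of_nonneg_right
      (rpow_le_rpow hm.le (hmv i) (by linarith)) (sq_nonneg _)
  have hpoinc := mul_le_mul_of_nonneg_left (poincare_wirtinger_fin_fwdDiff (v · ^ γ))
    (rpow_nonneg hm.le (2 * γ - 1))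
  have hcγ : 0 ≤ 2 * c * γ := by positivity
  nlinarith [sum_sq_fwdDiff_rpow_add_le hγ₁ hγ₂ hv hvbar hs,
    mul_le_mul_of_nonneg_left (hpoinc.trans hweight) hcγ]

/-- Assumption A2 of the discrete Bakry–Emery method on the line α − β = 1:
exponential decay of the discrete Fisher information in one time step. -/
theorem fisher_decay_one_step
    (β : ℝ) (hβ : 1 ≤ β) (α : ℝ) (hαβ : α = β + 1)
    (τ : ℝ) (hτ : 0 < τ)
    (N : ℕ) [NeZero N] (h : ℝ) (hh : h = 1 / N)
    (γ Cp : ℝ) (hγ : γ = (α + β - 1) / (2 * α))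
    (hCp : Cp = h ^ 2 / (4 * Real.sin (Real.pi * h) ^ 2))
    (v vbar : Fin N → ℝ) (hv : ∀ i, 0 < v i) (hvbar : ∀ i, 0 < vbar i)
    (hscheme : ∀ i : Fin N,
      v i - vbar i = α * τ / h ^ 2 * v i ^ ((α - 1) / α) *
        (v (i + 1) ^ (β / α) - 2 * v i ^ (β / α) + v (i - 1) ^ (β / α)))
    (F : (Fin N → ℝ) → ℝ)
    (hF : ∀ w : Fin N → ℝ, F w = 1 / h * ∑ i : Fin N, (w (i + 1) ^ γ - w i ^ γ) ^ 2) :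
    F v - F vbar ≤ -(τ * (2 * α * γ / Cp) * (⨅ i, v i) ^ ((β - 1) / α)) * F v := by
  have hα : 0 < α := by linarith
  have hγβ : γ = β / α := by rw [hγ, hαβ]; field_simp; ring
  have hγ₁ : 1 / 2 ≤ γ := by rw [hγβ, hαβ, le_div_iff₀ (by linarith)]; linarith
  have hγ₂ : γ ≤ 1 := by rw [hγβ, div_le_one hα]; linarith
  have hm : 0 < ⨅ i, v i := by
    obtain ⟨i, hi⟩ := exists_eq_ciInf_of_finite (f := v)
    exact hi ▸ hv i
  have hstep := implicit_step_sum_sq_fwdDiff_rpow_le hγ₁ hγ₂ (c := α * τ / h ^ 2) (by positivity)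
    hm (Finite.ciInf_le v) hvbar fun i ↦ by
      rw [hscheme i, ← hγβ, show (α - 1) / α = γ by rw [hγβ, hαβ, add_sub_cancel_right]]
  have hrate : τ * (2 * α * γ / Cp) * (⨅ i, v i) ^ ((β - 1) / α) =
      2 * (α * τ / h ^ 2) * γ * (⨅ i, v i) ^ (2 * γ - 1) * (4 * sin (π / N) ^ 2) := by
    rw [hCp, show (β - 1) / α = 2 * γ - 1 by rw [hγβ, hαβ]; field_simp; ring,
      show π * h = π / N by rw [hh]; ring, div_div_eq_mul_div]
    ring
  rw [hF, hF, hrate]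
  simp only [fwdDiff] at hstep
  have hh₀ : 0 ≤ 1 / h := by rw [hh]; positivity
  nlinarith [mul_le_mul_of_nonneg_left hstep hh₀]
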